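/- There exists a finite constant C > 0, depending only on A₂, ρ₄, ρ₅, ρ₆, c_K, ϑ₁, ϑ₂, ϑ₃ and the uniform bounds on the kernels, such that for all positive integers S₁, S₂, T, B_{S₁}, B_{S₂}, B_T: sup_{θ∈Θ} |m(θ) − σ(θ)| ≤ C · max{ B_{S₁}^{−ϑ₁}, B_{S₂}^{−ϑ₂}, B_T^{−ϑ₃}, S₁^{−1}, S₂^{−1}, T^{−1} }. -/

import Mathlib

/-!
Both `m(θ)` and `σ(θ)` are series in `Γ(h) e^{-i⟨h,θ⟩}`, the first weighted by the product
window `w(h) = ∏ₗ (1 - |hₗ|/Sₗ)⁺ Kₗ(hₗ/Bₗ)`, which vanishes outside the summation box, so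
`m(θ) - σ(θ) = Σₕ (w(h) - 1) Γ(h) e^{-i⟨h,θ⟩}`. In each coordinate
`|1 - wₗ(n)| ≤ M_K |n|/Sₗ + c |n|^{ϑₗ} Bₗ^{-ϑₗ}`, and `|1 - abc| ≤ M_K² (|1-a| + |1-b| + |1-c|)`.
Hence `|w(h) - 1|` is the rate `max{B^{-ϑ}, S⁻¹}` times a polynomial in `|h|`, which the
geometric decay of `Γ` makes summable; that sum is the constant `C`.
-/

open Complex

noncomputable section

/-- Inner product of a spatio-temporal shift `h ∈ ℤ³` with a frequency `θ`. -/
def zdot (h : ℤ × ℤ × ℤ) (θ : Fin 3 → ℝ) : ℝ :=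
  h.1 * θ 0 + h.2.1 * θ 1 + h.2.2 * θ 2

/-- The frequency cube Θ = [−π,π)³. -/
def Theta : Set (Fin 3 → ℝ) := Set.univ.pi fun _ => Set.Ico (-Real.pi) Real.pi

open Finset

lemma Summable.comp_natAbs {G : Type*} [AddCommGroup G] [TopologicalSpace G]
    [IsTopologicalAddGroup G] {f : ℕ → G} (hf : Summable f) : Summable fun n : ℤ => f n.natAbs :=
  .of_nat_of_neg (by simpa using hf) (by simpa using hf)

lemma summable_rpow_mul_geometric {ρ : ℝ} (hρ₀ : 0 ≤ ρ) (hρ₁ : ρ < 1) (ϑ : ℝ) :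
    Summable fun n : ℕ => (n : ℝ) ^ ϑ * ρ ^ n := by
  have hρ : ‖ρ‖ < 1 := by rwa [Real.norm_of_nonneg hρ₀]
  refine .of_nonneg_of_le (fun n => by positivity) (fun n => ?_)
    ((summable_geometric_of_lt_one hρ₀ hρ₁).add
      (summable_pow_mul_geometric_of_norm_lt_one ⌈ϑ⌉₊ hρ))
  have hpow : (n : ℝ) ^ ϑ ≤ 1 + (n : ℝ) ^ ⌈ϑ⌉₊ := by
    rcases Nat.eq_zero_or_pos n with rfl | hn
    · simpa using (Real.zero_rpow_le_one ϑ).trans (le_add_of_nonneg_right (by positivity))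
    · rw [← Real.rpow_natCast]
      exact (Real.rpow_le_rpow_of_exponent_le (by exact_mod_cast hn) (Nat.le_ceil ϑ)).trans
        (le_add_of_nonneg_left zero_le_one)
  calc (n : ℝ) ^ ϑ * ρ ^ n ≤ (1 + (n : ℝ) ^ ⌈ϑ⌉₊) * ρ ^ n := by gcongr
    _ = ρ ^ n + (n : ℝ) ^ ⌈ϑ⌉₊ * ρ ^ n := by ring

def prod₃ (f₁ f₂ f₃ : ℤ → ℝ) (h : ℤ × ℤ × ℤ) : ℝ := f₁ h.1 * f₂ h.2.1 * f₃ h.2.2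

lemma Summable.prod₃ {f₁ f₂ f₃ : ℤ → ℝ} (h₁ : Summable f₁) (h₂ : Summable f₂)
    (h₃ : Summable f₃) (h₁' : 0 ≤ f₁) (h₂' : 0 ≤ f₂) (h₃' : 0 ≤ f₃) :
    Summable (prod₃ f₁ f₂ f₃) :=
  (h₁.mul_of_nonneg (h₂.mul_of_nonneg h₃ h₂' h₃') h₁' fun _ => mul_nonneg (h₂' _) (h₃' _)).congr
    fun _ => (mul_assoc _ _ _).symm

-- The `1 +` lets a product of three majorants dominate a sum of their polynomial parts.
def lagMajorant (a c ϑ ρ : ℝ) (n : ℤ) : ℝ :=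
  (1 + a * |(n : ℝ)| + c * |(n : ℝ)| ^ ϑ) * ρ ^ n.natAbs

section lagMajorant

variable {a c ρ : ℝ}

lemma lagMajorant_pos (ha : 0 ≤ a) (hc : 0 ≤ c) (hρ : 0 < ρ) (ϑ : ℝ) (n : ℤ) :
    0 < lagMajorant a c ϑ ρ n := by
  unfold lagMajorant
  positivity

lemma summable_lagMajorant (a c ϑ : ℝ) (hρ : ρ ∈ Set.Ioo 0 1) :
    Summable (lagMajorant a c ϑ ρ) := by
  have h := fun t => (summable_rpow_mul_geometric hρ.1.le hρ.2 t).comp_natAbs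
  refine (((h 0).add ((h 1).mul_left a)).add ((h ϑ).mul_left c)).congr fun n => ?_
  simp only [lagMajorant, Nat.cast_natAbs, Int.cast_abs, Real.rpow_zero, Real.rpow_one]
  ring

variable {ϑ₁ ϑ₂ ϑ₃ ρ₁ ρ₂ ρ₃ : ℝ}

lemma summable_prod₃_lagMajorant (ha : 0 ≤ a) (hc : 0 ≤ c) (hρ₁ : ρ₁ ∈ Set.Ioo 0 1)
    (hρ₂ : ρ₂ ∈ Set.Ioo 0 1) (hρ₃ : ρ₃ ∈ Set.Ioo 0 1) :
    Summable (prod₃ (lagMajorant a c ϑ₁ ρ₁) (lagMajorant a c ϑ₂ ρ₂) (lagMajorant a c ϑ₃ ρ₃)) :=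
  .prod₃ (summable_lagMajorant _ _ _ hρ₁) (summable_lagMajorant _ _ _ hρ₂)
    (summable_lagMajorant _ _ _ hρ₃) (fun n => (lagMajorant_pos ha hc hρ₁.1 _ n).le)
    (fun n => (lagMajorant_pos ha hc hρ₂.1 _ n).le) (fun n => (lagMajorant_pos ha hc hρ₃.1 _ n).le)

lemma tsum_prod₃_lagMajorant_pos (ha : 0 ≤ a) (hc : 0 ≤ c) (hρ₁ : ρ₁ ∈ Set.Ioo 0 1)
    (hρ₂ : ρ₂ ∈ Set.Ioo 0 1) (hρ₃ : ρ₃ ∈ Set.Ioo 0 1) :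
    0 < ∑' h, prod₃ (lagMajorant a c ϑ₁ ρ₁) (lagMajorant a c ϑ₂ ρ₂) (lagMajorant a c ϑ₃ ρ₃) h := by
  have hpos : ∀ h,
      0 < prod₃ (lagMajorant a c ϑ₁ ρ₁) (lagMajorant a c ϑ₂ ρ₂) (lagMajorant a c ϑ₃ ρ₃) h :=
    fun h => mul_pos (mul_pos (lagMajorant_pos ha hc hρ₁.1 _ _)
      (lagMajorant_pos ha hc hρ₂.1 _ _)) (lagMajorant_pos ha hc hρ₃.1 _ _)
  exact (summable_prod₃_lagMajorant ha hc hρ₁ hρ₂ hρ₃).tsum_pos (fun h => (hpos h).le) 0 (hpos 0)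

end lagMajorant

structure KernelBounds (K : ℝ → ℝ) (MK c ϑ : ℝ) : Prop where
  abs_le : ∀ u, |K u| ≤ MK
  abs_one_sub_le : ∀ u, |1 - K u| ≤ c * |u| ^ ϑ

namespace KernelBounds

variable {K : ℝ → ℝ} {MK c ϑ : ℝ}

-- Off `[-1, 1]` the kernel vanishes and `1 ≤ |u| ^ ϑ`, whence the constant `max 1 c`.
lemma of_support (hϑ : 0 ≤ ϑ) (hnn : ∀ u, 0 ≤ K u) (hbd : ∀ u, K u ≤ MK)
    (hsupp : ∀ u, 1 < |u| → K u = 0) (hhol : ∀ u ∈ Set.Icc (-1 : ℝ) 1, |K u - 1| ≤ c * |u| ^ ϑ) :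
    KernelBounds K MK (max 1 c) ϑ where
  abs_le u := by rw [abs_of_nonneg (hnn u)]; exact hbd u
  abs_one_sub_le u := by
    rcases le_or_gt |u| 1 with hu | hu
    · rw [abs_sub_comm]
      exact (hhol u (_root_.abs_le.mp hu)).trans (by gcongr; exact le_max_right 1 c)
    · rw [hsupp u hu, sub_zero, abs_one]
      exact one_le_mul_of_one_le_of_one_le (le_max_left 1 c) (Real.one_le_rpow hu.le hϑ)

lemma bound_nonneg (hK : KernelBounds K MK c ϑ) : 0 ≤ MK := (abs_nonneg _).trans (hK.abs_le 0)

lemma const_nonneg (hK : KernelBounds K MK c ϑ) : 0 ≤ c := by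
  simpa using (abs_nonneg _).trans (hK.abs_one_sub_le 1)

end KernelBounds

lemma abs_one_sub_max_zero_one_sub_le {x : ℝ} (hx : 0 ≤ x) : |1 - max 0 (1 - x)| ≤ x := by
  rcases le_total x 1 with h | h
  · rw [max_eq_right (by linarith), sub_sub_cancel, abs_of_nonneg hx]
  · rw [max_eq_left (by linarith), sub_zero, abs_one]
    exact h

lemma abs_one_sub_mul_mul_le {a b c M : ℝ} (hM : 1 ≤ M) (ha : |a| ≤ M) (hb : |b| ≤ M) :
    |1 - a * b * c| ≤ M ^ 2 * (|1 - a| + |1 - b| + |1 - c|) := by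
  have hM' : M ≤ M ^ 2 := by nlinarith
  calc |1 - a * b * c| = |(1 - a) + a * (1 - b) + a * b * (1 - c)| := by ring_nf
    _ ≤ |1 - a| + |a| * |1 - b| + |a| * |b| * |1 - c| := by
        simpa only [abs_mul] using abs_add_three (1 - a) (a * (1 - b)) (a * b * (1 - c))
    _ ≤ M ^ 2 * |1 - a| + M ^ 2 * |1 - b| + M ^ 2 * |1 - c| := by
        gcongr
        · exact le_mul_of_one_le_left (abs_nonneg _) (hM.trans hM')
        · exact ha.trans hM'
        · calc |a| * |b| ≤ M * M := mul_le_mul ha hb (abs_nonneg _) (by linarith)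
            _ = M ^ 2 := (sq M).symm
    _ = M ^ 2 * (|1 - a| + |1 - b| + |1 - c|) := by ring

lemma add_add_le_one_add_mul_one_add_mul_one_add {x y z : ℝ} (hx : 0 ≤ x) (hy : 0 ≤ y)
    (hz : 0 ≤ z) : x + y + z ≤ (1 + x) * (1 + y) * (1 + z) := by
  nlinarith [mul_nonneg hx hy, mul_nonneg (mul_nonneg hx hy) hz, mul_nonneg hx hz, mul_nonneg hy hz]

lemma norm_sum_mul_sub_tsum_le {𝕜 α : Type*} [RCLike 𝕜] (s : Finset α) {w : α → ℝ}
    (hw : ∀ x ∉ s, w x = 0) {f : α → 𝕜} (hf : Summable f) {g : α → ℝ} (hg : Summable g)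
    (hwf : ∀ x, |1 - w x| * ‖f x‖ ≤ g x) :
    ‖∑ x ∈ s, (w x : 𝕜) * f x - ∑' x, f x‖ ≤ ∑' x, g x := by
  have hsupp : ∀ x ∉ s, (w x : 𝕜) * f x = 0 := fun x hx => by simp [hw x hx]
  rw [← tsum_eq_sum (L := .unconditional α) hsupp,
    ← (summable_of_ne_finset_zero (L := .unconditional α) hsupp).tsum_sub hf]
  refine tsum_of_norm_bounded hg.hasSum fun x => ?_
  have : f x - (w x : 𝕜) * f x = ((1 - w x : ℝ) : 𝕜) * f x := by push_cast; ring
  rw [← norm_neg, neg_sub, this, norm_mul, RCLike.norm_ofReal]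
  exact hwf x

-- The positive part makes the window vanish for `|n| ≥ S`, so the truncated sums defining the
-- estimator become series over all lags.
def lagWindow (K : ℝ → ℝ) (S B : ℕ) (n : ℤ) : ℝ :=
  max 0 (1 - |(n : ℝ)| / S) * K (n / B)

def lagBox (S₁ S₂ S₃ : ℕ) : Finset (ℤ × ℤ × ℤ) :=
  Icc (1 - (S₁ : ℤ)) (S₁ - 1) ×ˢ Icc (1 - (S₂ : ℤ)) (S₂ - 1) ×ˢ Icc (1 - (S₃ : ℤ)) (S₃ - 1)

section lagWindow

variable {K : ℝ → ℝ} {S B : ℕ} {n : ℤ}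

lemma lagWindow_of_mem_Icc (hn : n ∈ Icc (1 - (S : ℤ)) (S - 1)) :
    lagWindow K S B n = (1 - |(n : ℝ)| / S) * K (n / B) := by
  rw [mem_Icc] at hn
  have hS : (|n| : ℝ) ≤ S := by exact_mod_cast abs_le.mpr ⟨by omega, by omega⟩
  rw [lagWindow, max_eq_right (sub_nonneg.mpr (div_le_one_of_le₀ hS (Nat.cast_nonneg S)))]

lemma lagWindow_of_notMem_Icc (hS : 0 < S) (hn : n ∉ Icc (1 - (S : ℤ)) (S - 1)) :
    lagWindow K S B n = 0 := by
  rw [mem_Icc] at hn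
  have hS' : (S : ℝ) ≤ |(n : ℝ)| := by exact_mod_cast le_abs.mpr (by omega)
  rw [lagWindow, max_eq_left (sub_nonpos.mpr ((one_le_div (by positivity)).mpr hS')), zero_mul]

variable {MK c ϑ : ℝ}

lemma abs_lagWindow_le (hK : KernelBounds K MK c ϑ) (n : ℤ) : |lagWindow K S B n| ≤ MK := by
  rw [lagWindow, abs_mul, abs_of_nonneg (le_max_left _ _)]
  have ht : max 0 (1 - |(n : ℝ)| / S) ≤ 1 := max_le zero_le_one (sub_le_self _ (by positivity))
  simpa using mul_le_mul ht (hK.abs_le _) (abs_nonneg _) zero_le_one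

lemma abs_one_sub_lagWindow_le (hK : KernelBounds K MK c ϑ) {M : ℝ} (hS : (S : ℝ)⁻¹ ≤ M)
    (hB : (B : ℝ) ^ (-ϑ) ≤ M) (n : ℤ) :
    |1 - lagWindow K S B n| ≤ (MK * |(n : ℝ)| + c * |(n : ℝ)| ^ ϑ) * M := by
  have hKn : |1 - K (n / B)| ≤ c * (|(n : ℝ)| ^ ϑ * (B : ℝ) ^ (-ϑ)) := by
    have : |(n : ℝ) / B| ^ ϑ = |(n : ℝ)| ^ ϑ * (B : ℝ) ^ (-ϑ) := by
      rw [abs_div, Nat.abs_cast, Real.div_rpow (abs_nonneg _) (Nat.cast_nonneg B),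
        Real.rpow_neg (Nat.cast_nonneg B), div_eq_mul_inv]
    exact this ▸ hK.abs_one_sub_le _
  have ht := abs_one_sub_max_zero_one_sub_le (x := |(n : ℝ)| / S) (by positivity)
  have hMK := hK.bound_nonneg
  have hc := hK.const_nonneg
  calc |1 - lagWindow K S B n|
      = |(1 - K (n / B)) + K (n / B) * (1 - max 0 (1 - |(n : ℝ)| / S))| := by
        rw [lagWindow]; ring_nf
    _ ≤ |1 - K (n / B)| + |K (n / B)| * |1 - max 0 (1 - |(n : ℝ)| / S)| := by
        rw [← abs_mul]; exact abs_add_le _ _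
    _ ≤ c * (|(n : ℝ)| ^ ϑ * M) + MK * (|(n : ℝ)| * M) := by
        gcongr
        · exact hKn.trans (by gcongr)
        · exact hK.abs_le _
        · exact ht.trans (by rw [div_eq_mul_inv]; gcongr)
    _ = (MK * |(n : ℝ)| + c * |(n : ℝ)| ^ ϑ) * M := by ring

end lagWindow

lemma sum_Icc_triangular_eq_sum_lagBox (K₁ K₂ K₃ : ℝ → ℝ) (S₁ S₂ S₃ B₁ B₂ B₃ : ℕ)
    (F G : ℤ × ℤ × ℤ → ℂ) :
    ∑ h₁ ∈ Icc (1 - (S₁ : ℤ)) ((S₁ : ℤ) - 1), ∑ h₂ ∈ Icc (1 - (S₂ : ℤ)) ((S₂ : ℤ) - 1),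
      ∑ h₃ ∈ Icc (1 - (S₃ : ℤ)) ((S₃ : ℤ) - 1),
        (((1 - |(h₁ : ℝ)| / S₁) * (1 - |(h₂ : ℝ)| / S₂) * (1 - |(h₃ : ℝ)| / S₃) *
          K₁ ((h₁ : ℝ) / B₁) * K₂ ((h₂ : ℝ) / B₂) * K₃ ((h₃ : ℝ) / B₃) : ℝ) : ℂ) *
          F (h₁, h₂, h₃) * G (h₁, h₂, h₃) =
    ∑ h ∈ lagBox S₁ S₂ S₃,
      (prod₃ (lagWindow K₁ S₁ B₁) (lagWindow K₂ S₂ B₂) (lagWindow K₃ S₃ B₃) h : ℂ) *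
        (F h * G h) := by
  simp only [lagBox, sum_product]
  refine sum_congr rfl fun h₁ hh₁ => sum_congr rfl fun h₂ hh₂ => sum_congr rfl fun h₃ hh₃ => ?_
  rw [prod₃, lagWindow_of_mem_Icc hh₁, lagWindow_of_mem_Icc hh₂, lagWindow_of_mem_Icc hh₃]
  push_cast
  ring

section lagWindow₃

variable {K₁ K₂ K₃ : ℝ → ℝ} {S₁ S₂ S₃ B₁ B₂ B₃ : ℕ}

lemma prod₃_lagWindow_of_notMem (hS₁ : 0 < S₁) (hS₂ : 0 < S₂) (hS₃ : 0 < S₃) {h : ℤ × ℤ × ℤ}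
    (hh : h ∉ lagBox S₁ S₂ S₃) :
    prod₃ (lagWindow K₁ S₁ B₁) (lagWindow K₂ S₂ B₂) (lagWindow K₃ S₃ B₃) h = 0 := by
  simp only [lagBox, mem_product, not_and_or] at hh
  rcases hh with hh | hh | hh
  · rw [prod₃, lagWindow_of_notMem_Icc hS₁ hh, zero_mul, zero_mul]
  · rw [prod₃, lagWindow_of_notMem_Icc hS₂ hh, mul_zero, zero_mul]
  · rw [prod₃, lagWindow_of_notMem_Icc hS₃ hh, mul_zero]

variable {MK c ϑ₁ ϑ₂ ϑ₃ ρ₁ ρ₂ ρ₃ M : ℝ}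

lemma abs_one_sub_prod₃_lagWindow_mul_le (hMK : 1 ≤ MK) (hK₁ : KernelBounds K₁ MK c ϑ₁)
    (hK₂ : KernelBounds K₂ MK c ϑ₂) (hK₃ : KernelBounds K₃ MK c ϑ₃) (hρ₁ : 0 ≤ ρ₁)
    (hρ₂ : 0 ≤ ρ₂) (hρ₃ : 0 ≤ ρ₃) (hS₁ : (S₁ : ℝ)⁻¹ ≤ M) (hS₂ : (S₂ : ℝ)⁻¹ ≤ M)
    (hS₃ : (S₃ : ℝ)⁻¹ ≤ M) (hB₁ : (B₁ : ℝ) ^ (-ϑ₁) ≤ M) (hB₂ : (B₂ : ℝ) ^ (-ϑ₂) ≤ M)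
    (hB₃ : (B₃ : ℝ) ^ (-ϑ₃) ≤ M) (h : ℤ × ℤ × ℤ) :
    |1 - prod₃ (lagWindow K₁ S₁ B₁) (lagWindow K₂ S₂ B₂) (lagWindow K₃ S₃ B₃) h| *
        (ρ₁ ^ h.1.natAbs * ρ₂ ^ h.2.1.natAbs * ρ₃ ^ h.2.2.natAbs) ≤
      MK ^ 2 * M *
        prod₃ (lagMajorant MK c ϑ₁ ρ₁) (lagMajorant MK c ϑ₂ ρ₂) (lagMajorant MK c ϑ₃ ρ₃) h := by
  obtain ⟨n₁, n₂, n₃⟩ := h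
  have hM : 0 ≤ M := (inv_nonneg.mpr (Nat.cast_nonneg S₃)).trans hS₃
  have hMK₀ := hK₁.bound_nonneg
  have hc := hK₁.const_nonneg
  have herr : |1 - lagWindow K₁ S₁ B₁ n₁ * lagWindow K₂ S₂ B₂ n₂ * lagWindow K₃ S₃ B₃ n₃| ≤
      MK ^ 2 * M * ((1 + (MK * |(n₁ : ℝ)| + c * |(n₁ : ℝ)| ^ ϑ₁)) *
        (1 + (MK * |(n₂ : ℝ)| + c * |(n₂ : ℝ)| ^ ϑ₂)) *
        (1 + (MK * |(n₃ : ℝ)| + c * |(n₃ : ℝ)| ^ ϑ₃))) := by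
    calc _ ≤ MK ^ 2 * (|1 - lagWindow K₁ S₁ B₁ n₁| + |1 - lagWindow K₂ S₂ B₂ n₂| +
          |1 - lagWindow K₃ S₃ B₃ n₃|) :=
          abs_one_sub_mul_mul_le hMK (abs_lagWindow_le hK₁ n₁) (abs_lagWindow_le hK₂ n₂)
      _ ≤ MK ^ 2 * ((MK * |(n₁ : ℝ)| + c * |(n₁ : ℝ)| ^ ϑ₁) * M +
          (MK * |(n₂ : ℝ)| + c * |(n₂ : ℝ)| ^ ϑ₂) * M +
          (MK * |(n₃ : ℝ)| + c * |(n₃ : ℝ)| ^ ϑ₃) * M) := by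
          gcongr
          · exact abs_one_sub_lagWindow_le hK₁ hS₁ hB₁ n₁
          · exact abs_one_sub_lagWindow_le hK₂ hS₂ hB₂ n₂
          · exact abs_one_sub_lagWindow_le hK₃ hS₃ hB₃ n₃
      _ ≤ _ := by
          rw [← add_mul, ← add_mul, mul_comm _ M, ← mul_assoc]
          gcongr
          exact add_add_le_one_add_mul_one_add_mul_one_add (by positivity) (by positivity)
            (by positivity)
  refine (mul_le_mul_of_nonneg_right herr (by positivity)).trans_eq ?_
  simp only [prod₃, lagMajorant]
  ring

lemma norm_sum_lagBox_sub_tsum_le (hMK : 1 ≤ MK) (hK₁ : KernelBounds K₁ MK c ϑ₁)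
    (hK₂ : KernelBounds K₂ MK c ϑ₂) (hK₃ : KernelBounds K₃ MK c ϑ₃) (hρ₁ : ρ₁ ∈ Set.Ioo 0 1)
    (hρ₂ : ρ₂ ∈ Set.Ioo 0 1) (hρ₃ : ρ₃ ∈ Set.Ioo 0 1) {A : ℝ} (hA : 0 ≤ A)
    {f : ℤ × ℤ × ℤ → ℂ}
    (hf : ∀ h, ‖f h‖ ≤ A * ρ₁ ^ h.1.natAbs * ρ₂ ^ h.2.1.natAbs * ρ₃ ^ h.2.2.natAbs)
    (hS₁ : 0 < S₁) (hS₂ : 0 < S₂) (hS₃ : 0 < S₃)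
    (hMS₁ : (S₁ : ℝ)⁻¹ ≤ M) (hMS₂ : (S₂ : ℝ)⁻¹ ≤ M) (hMS₃ : (S₃ : ℝ)⁻¹ ≤ M)
    (hMB₁ : (B₁ : ℝ) ^ (-ϑ₁) ≤ M) (hMB₂ : (B₂ : ℝ) ^ (-ϑ₂) ≤ M) (hMB₃ : (B₃ : ℝ) ^ (-ϑ₃) ≤ M) :
    ‖∑ h ∈ lagBox S₁ S₂ S₃,
        (prod₃ (lagWindow K₁ S₁ B₁) (lagWindow K₂ S₂ B₂) (lagWindow K₃ S₃ B₃) h : ℂ) * f h -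
        ∑' h, f h‖ ≤
      A * MK ^ 2 *
        (∑' h, prod₃ (lagMajorant MK c ϑ₁ ρ₁) (lagMajorant MK c ϑ₂ ρ₂) (lagMajorant MK c ϑ₃ ρ₃) h) *
        M := by
  have hgeom := fun ρ (hρ : ρ ∈ Set.Ioo (0 : ℝ) 1) =>
    (summable_geometric_of_lt_one hρ.1.le hρ.2).comp_natAbs
  have hf' : Summable f := .of_norm_bounded (((hgeom _ hρ₁).prod₃ (hgeom _ hρ₂) (hgeom _ hρ₃)
    (fun _ => pow_nonneg hρ₁.1.le _) (fun _ => pow_nonneg hρ₂.1.le _)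
    (fun _ => pow_nonneg hρ₃.1.le _)).mul_left A)
    fun h => (hf h).trans_eq (by simp only [prod₃]; ring)
  have hG := summable_prod₃_lagMajorant (ϑ₁ := ϑ₁) (ϑ₂ := ϑ₂) (ϑ₃ := ϑ₃) hK₁.bound_nonneg
    hK₁.const_nonneg hρ₁ hρ₂ hρ₃
  rw [← tsum_mul_left, ← tsum_mul_right]
  refine norm_sum_mul_sub_tsum_le _ (fun _ => prod₃_lagWindow_of_notMem hS₁ hS₂ hS₃) hf'
    ((hG.mul_left _).mul_right _) fun h => ?_
  calc _ ≤ |1 - prod₃ (lagWindow K₁ S₁ B₁) (lagWindow K₂ S₂ B₂) (lagWindow K₃ S₃ B₃) h| *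
        (A * (ρ₁ ^ h.1.natAbs * ρ₂ ^ h.2.1.natAbs * ρ₃ ^ h.2.2.natAbs)) := by
        gcongr
        exact (hf h).trans_eq (by ring)
    _ ≤ A * (MK ^ 2 * M *
        prod₃ (lagMajorant MK c ϑ₁ ρ₁) (lagMajorant MK c ϑ₂ ρ₂) (lagMajorant MK c ϑ₃ ρ₃) h) := by
        rw [mul_left_comm]
        exact mul_le_mul_of_nonneg_left (abs_one_sub_prod₃_lagWindow_mul_le hMK hK₁ hK₂ hK₃
          hρ₁.1.le hρ₂.1.le hρ₃.1.le hMS₁ hMS₂ hMS₃ hMB₁ hMB₂ hMB₃ h) hA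
    _ = _ := by ring

end lagWindow₃

theorem stmt_16_general
    (Γ : ℤ × ℤ × ℤ → ℂ) (A₂ ρ₄ ρ₅ ρ₆ : ℝ) (hA₂ : 0 < A₂)
    (hρ₄ : ρ₄ ∈ Set.Ioo (0 : ℝ) 1) (hρ₅ : ρ₅ ∈ Set.Ioo (0 : ℝ) 1)
    (hρ₆ : ρ₆ ∈ Set.Ioo (0 : ℝ) 1)
    (hΓ : ∀ h : ℤ × ℤ × ℤ,
      ‖Γ h‖ ≤ A₂ * ρ₄ ^ h.1.natAbs * ρ₅ ^ h.2.1.natAbs * ρ₆ ^ h.2.2.natAbs)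
    (K₁ K₂ K₃ : ℝ → ℝ) (ϑ₁ ϑ₂ ϑ₃ cK : ℝ)
    (hϑ₁ : 0 < ϑ₁) (hϑ₂ : 0 < ϑ₂) (hϑ₃ : 0 < ϑ₃)
    (hKnn : ∀ u, 0 ≤ K₁ u ∧ 0 ≤ K₂ u ∧ 0 ≤ K₃ u)
    (MK : ℝ) (hKbd : ∀ u, K₁ u ≤ MK ∧ K₂ u ≤ MK ∧ K₃ u ≤ MK)
    (hKsupp : ∀ u, 1 < |u| → K₁ u = 0 ∧ K₂ u = 0 ∧ K₃ u = 0)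
    (hK0 : K₁ 0 = 1 ∧ K₂ 0 = 1 ∧ K₃ 0 = 1)
    (hKhol : ∀ u ∈ Set.Icc (-1 : ℝ) 1,
      |K₁ u - 1| ≤ cK * |u| ^ ϑ₁ ∧ |K₂ u - 1| ≤ cK * |u| ^ ϑ₂ ∧ |K₃ u - 1| ≤ cK * |u| ^ ϑ₃)
    (σ : (Fin 3 → ℝ) → ℂ)
    (hσ : ∀ θ, σ θ = ∑' h : ℤ × ℤ × ℤ, Γ h * Complex.exp (-(Complex.I * (zdot h θ : ℝ))))
    (m : ℕ → ℕ → ℕ → ℕ → ℕ → ℕ → (Fin 3 → ℝ) → ℂ)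
    (hm : ∀ (S₁ S₂ T B₁ B₂ B₃ : ℕ) (θ : Fin 3 → ℝ),
      m S₁ S₂ T B₁ B₂ B₃ θ =
        ∑ h₁ ∈ Finset.Icc (1 - (S₁ : ℤ)) ((S₁ : ℤ) - 1),
        ∑ h₂ ∈ Finset.Icc (1 - (S₂ : ℤ)) ((S₂ : ℤ) - 1),
        ∑ h₃ ∈ Finset.Icc (1 - (T : ℤ)) ((T : ℤ) - 1),
          (((1 - |(h₁ : ℝ)| / S₁) * (1 - |(h₂ : ℝ)| / S₂) * (1 - |(h₃ : ℝ)| / T) *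
            K₁ ((h₁ : ℝ) / B₁) * K₂ ((h₂ : ℝ) / B₂) * K₃ ((h₃ : ℝ) / B₃) : ℝ) : ℂ) *
            Γ (h₁, h₂, h₃) *
            Complex.exp (-(Complex.I * (zdot (h₁, h₂, h₃) θ : ℝ)))) :
    ∃ C > 0, ∀ (S₁ S₂ T B₁ B₂ B₃ : ℕ),
      0 < S₁ → 0 < S₂ → 0 < T → 0 < B₁ → 0 < B₂ → 0 < B₃ →
      ∀ θ ∈ Theta,
        ‖m S₁ S₂ T B₁ B₂ B₃ θ - σ θ‖ ≤
          C * max (max (max ((B₁ : ℝ) ^ (-ϑ₁)) ((B₂ : ℝ) ^ (-ϑ₂)))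
                    (max ((B₃ : ℝ) ^ (-ϑ₃)) ((S₁ : ℝ)⁻¹)))
                  (max ((S₂ : ℝ)⁻¹) ((T : ℝ)⁻¹)) := by
  have hMK : 1 ≤ MK := hK0.1 ▸ (hKbd 0).1
  have hK₁ := KernelBounds.of_support hϑ₁.le (fun u => (hKnn u).1) (fun u => (hKbd u).1)
    (fun u hu => (hKsupp u hu).1) (fun u hu => (hKhol u hu).1)
  have hK₂ := KernelBounds.of_support hϑ₂.le (fun u => (hKnn u).2.1) (fun u => (hKbd u).2.1)
    (fun u hu => (hKsupp u hu).2.1) (fun u hu => (hKhol u hu).2.1)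
  have hK₃ := KernelBounds.of_support hϑ₃.le (fun u => (hKnn u).2.2) (fun u => (hKbd u).2.2)
    (fun u hu => (hKsupp u hu).2.2) (fun u hu => (hKhol u hu).2.2)
  refine ⟨A₂ * MK ^ 2 * ∑' h, prod₃ (lagMajorant MK (max 1 cK) ϑ₁ ρ₄)
      (lagMajorant MK (max 1 cK) ϑ₂ ρ₅) (lagMajorant MK (max 1 cK) ϑ₃ ρ₆) h,
    mul_pos (by positivity) (tsum_prod₃_lagMajorant_pos hK₁.bound_nonneg hK₁.const_nonneg
      hρ₄ hρ₅ hρ₆), ?_⟩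
  intro S₁ S₂ T B₁ B₂ B₃ hS₁ hS₂ hT _ _ _ θ _
  rw [hm, sum_Icc_triangular_eq_sum_lagBox K₁ K₂ K₃ S₁ S₂ T B₁ B₂ B₃ Γ
    (fun h => Complex.exp (-(Complex.I * (zdot h θ : ℝ)))), hσ]
  refine norm_sum_lagBox_sub_tsum_le hMK hK₁ hK₂ hK₃ hρ₄ hρ₅ hρ₆ hA₂.le
    (fun h => by simpa [Complex.norm_exp] using hΓ h) hS₁ hS₂ hT ?_ ?_ ?_ ?_ ?_ ?_ <;>
  simp only [le_max_iff, le_refl, or_true, true_or]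

/-- deterministic bias bound.  If `Γ : ℤ³ → ℂ` decays geometrically,
`σ(θ) = Σ_h Γ(h) e^{−i⟨h,θ⟩}`, the kernels `K_l` are bounded, supported in `[−1,1]`,
with `K_l(0) = 1` and `|K_l(u) − 1| ≤ c_K |u|^{ϑ_l}`, and `m(θ)` is the triangularly
weighted, kernel-smoothed finite sum, then there is a constant `C > 0` depending only on
the stated constants such that for all sizes and bandwidths,
`sup_{θ∈Θ} |m(θ) − σ(θ)| ≤ C · max{B_{S₁}^{−ϑ₁}, B_{S₂}^{−ϑ₂}, B_T^{−ϑ₃}, S₁⁻¹, S₂⁻¹, T⁻¹}`. -/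
theorem stmt_16
    (Γ : ℤ × ℤ × ℤ → ℂ) (A₂ ρ₄ ρ₅ ρ₆ : ℝ) (hA₂ : 0 < A₂)
    (hρ₄ : ρ₄ ∈ Set.Ioo (0 : ℝ) 1) (hρ₅ : ρ₅ ∈ Set.Ioo (0 : ℝ) 1)
    (hρ₆ : ρ₆ ∈ Set.Ioo (0 : ℝ) 1)
    (hΓ : ∀ h : ℤ × ℤ × ℤ,
      ‖Γ h‖ ≤ A₂ * ρ₄ ^ h.1.natAbs * ρ₅ ^ h.2.1.natAbs * ρ₆ ^ h.2.2.natAbs)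
    (K₁ K₂ K₃ : ℝ → ℝ) (ϑ₁ ϑ₂ ϑ₃ cK : ℝ)
    (hϑ₁ : 0 < ϑ₁) (hϑ₂ : 0 < ϑ₂) (hϑ₃ : 0 < ϑ₃) (hcK : 0 < cK)
    (hKnn : ∀ u, 0 ≤ K₁ u ∧ 0 ≤ K₂ u ∧ 0 ≤ K₃ u)
    (MK : ℝ) (hKbd : ∀ u, K₁ u ≤ MK ∧ K₂ u ≤ MK ∧ K₃ u ≤ MK)
    (hKsupp : ∀ u, 1 < |u| → K₁ u = 0 ∧ K₂ u = 0 ∧ K₃ u = 0)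
    (hK0 : K₁ 0 = 1 ∧ K₂ 0 = 1 ∧ K₃ 0 = 1)
    (hKhol : ∀ u ∈ Set.Icc (-1 : ℝ) 1,
      |K₁ u - 1| ≤ cK * |u| ^ ϑ₁ ∧ |K₂ u - 1| ≤ cK * |u| ^ ϑ₂ ∧ |K₃ u - 1| ≤ cK * |u| ^ ϑ₃)
    (σ : (Fin 3 → ℝ) → ℂ)
    (hσ : ∀ θ, σ θ = ∑' h : ℤ × ℤ × ℤ, Γ h * Complex.exp (-(Complex.I * (zdot h θ : ℝ))))
    (m : ℕ → ℕ → ℕ → ℕ → ℕ → ℕ → (Fin 3 → ℝ) → ℂ)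
    (hm : ∀ (S₁ S₂ T B₁ B₂ B₃ : ℕ) (θ : Fin 3 → ℝ),
      m S₁ S₂ T B₁ B₂ B₃ θ =
        ∑ h₁ ∈ Finset.Icc (1 - (S₁ : ℤ)) ((S₁ : ℤ) - 1),
        ∑ h₂ ∈ Finset.Icc (1 - (S₂ : ℤ)) ((S₂ : ℤ) - 1),
        ∑ h₃ ∈ Finset.Icc (1 - (T : ℤ)) ((T : ℤ) - 1),
          (((1 - |(h₁ : ℝ)| / S₁) * (1 - |(h₂ : ℝ)| / S₂) * (1 - |(h₃ : ℝ)| / T) *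
            K₁ ((h₁ : ℝ) / B₁) * K₂ ((h₂ : ℝ) / B₂) * K₃ ((h₃ : ℝ) / B₃) : ℝ) : ℂ) *
            Γ (h₁, h₂, h₃) *
            Complex.exp (-(Complex.I * (zdot (h₁, h₂, h₃) θ : ℝ)))) :
    ∃ C > 0, ∀ (S₁ S₂ T B₁ B₂ B₃ : ℕ),
      0 < S₁ → 0 < S₂ → 0 < T → 0 < B₁ → 0 < B₂ → 0 < B₃ →
      ∀ θ ∈ Theta,
        ‖m S₁ S₂ T B₁ B₂ B₃ θ - σ θ‖ ≤
          C * max (max (max ((B₁ : ℝ) ^ (-ϑ₁)) ((B₂ : ℝ) ^ (-ϑ₂)))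
                    (max ((B₃ : ℝ) ^ (-ϑ₃)) ((S₁ : ℝ)⁻¹)))
                  (max ((S₂ : ℝ)⁻¹) ((T : ℝ)⁻¹)) :=
  stmt_16_general Γ A₂ ρ₄ ρ₅ ρ₆ hA₂ hρ₄ hρ₅ hρ₆ hΓ K₁ K₂ K₃ ϑ₁ ϑ₂ ϑ₃ cK hϑ₁ hϑ₂ hϑ₃ hKnn MK hKbd
    hKsupp hK0 hKhol σ hσ m hm

end
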